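/- arXiv:2002.05516 — 3 statements merged into one kernel-verified Lean document; each statement's English description precedes it below -/
import Mathlib

section
/- Let each f_i : ℝ^d → ℝ be differentiable, L-smooth and μ-strongly convex with μ > 0. For λ ≥ 0 let x(λ) denote the unique minimizer of F = f + λψ, let x(0) denote the vector whose i-th block is the unique minimizer of f_i, and let x(∞) ∈ ℝ^{nd} have all n blocks equal to the unique minimizer of P(z) = (1/n)·Σ_{i=1}^n f_i(z). Then for every λ > 0 one has ψ(x(λ)) ≤ (f(x(∞)) − f(x(0)))/λ. -/
open scoped BigOperators
open Finset

noncomputable section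

/-- `Vec d` is the Euclidean space `ℝ^d`. -/
abbrev Vec (d : ℕ) := EuclideanSpace ℝ (Fin d)

/-- `Blk n d` is `ℝ^{nd}`, viewed as `n`-tuples of vectors in `ℝ^d`
with the Euclidean norm `‖x‖² = Σᵢ ‖xᵢ‖²`. -/
abbrev Blk (n d : ℕ) := PiLp 2 (fun _ : Fin n => Vec d)

/-- the block average `x̄ = (1/n) Σᵢ xᵢ`. -/
def blkAvg {n d : ℕ} (x : Blk n d) : Vec d := (n : ℝ)⁻¹ • ∑ i, x i

/-- `f(x) = (1/n) Σᵢ fᵢ(xᵢ)`. -/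
def fTot {n d : ℕ} (f : Fin n → Vec d → ℝ) (x : Blk n d) : ℝ :=
  (n : ℝ)⁻¹ * ∑ i, f i (x i)

/-- `ψ(x) = (1/(2n)) Σᵢ ‖xᵢ - x̄‖²`. -/
def psi {n d : ℕ} (x : Blk n d) : ℝ :=
  (2 * n : ℝ)⁻¹ * ∑ i, ‖x i - blkAvg x‖ ^ 2

/-- `F(x) = f(x) + λ ψ(x)`. -/
def FF {n d : ℕ} (f : Fin n → Vec d → ℝ) (lam : ℝ) (x : Blk n d) : ℝ :=
  fTot f x + lam * psi x

/-- the gradient of `f`: its `i`-th block is `(1/n) ∇fᵢ(xᵢ)`, where `g i` is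
the gradient of `fᵢ`. -/
def gradTot {n d : ℕ} (g : Fin n → Vec d → Vec d) (x : Blk n d) : Blk n d :=
  WithLp.toLp 2 (fun i => (n : ℝ)⁻¹ • g i (x i))

/-- the gradient of `ψ`: its `i`-th block is `(1/n) (xᵢ - x̄)`. -/
def gradPsi {n d : ℕ} (x : Blk n d) : Blk n d :=
  WithLp.toLp 2 (fun i => (n : ℝ)⁻¹ • (x i - blkAvg x))

/-!
Compare `x(λ)` with the consensus point `x(∞)`, on which `ψ` vanishes: minimality of
`x(λ)` gives `f(x(λ)) + λ ψ(x(λ)) ≤ F(x(∞)) = f(x(∞))`, and blockwise minimality of `x(0)`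
gives `f(x(0)) ≤ f(x(λ))`.
-/

section Consensus

variable {n d : ℕ}

theorem blkAvg_const (hn : n ≠ 0) (z : Vec d) :
    blkAvg (WithLp.toLp 2 (fun _ => z) : Blk n d) = z := by
  rw [blkAvg, WithLp.ofLp_toLp, sum_const, card_univ, Fintype.card_fin,
    ← Nat.cast_smul_eq_nsmul ℝ, smul_smul, inv_mul_cancel₀ (Nat.cast_ne_zero.mpr hn), one_smul]

theorem psi_const (z : Vec d) : psi (WithLp.toLp 2 (fun _ => z) : Blk n d) = 0 := by
  rcases eq_or_ne n 0 with rfl | hn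
  · simp [psi]
  · simp [psi, blkAvg_const hn]

theorem fTot_le_fTot {f : Fin n → Vec d → ℝ} {x y : Blk n d}
    (h : ∀ i, f i (x i) ≤ f i (y i)) : fTot f x ≤ fTot f y :=
  mul_le_mul_of_nonneg_left (sum_le_sum fun i _ => h i) (by positivity)

theorem mul_psi_le_of_forall_FF_le {f : Fin n → Vec d → ℝ} {lam : ℝ} {x y : Blk n d}
    (hx : ∀ y, FF f lam x ≤ FF f lam y) (hy : psi y = 0) :
    lam * psi x ≤ fTot f y - fTot f x := by
  have := hx y
  rw [FF, FF, hy, mul_zero, add_zero] at this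
  linarith

end Consensus

theorem stmt2_general (n d : ℕ) (lam : ℝ) (hlam : 0 < lam)
    (f : Fin n → Vec d → ℝ)
    (xlam : Blk n d) (hxlam : ∀ y : Blk n d, FF f lam xlam ≤ FF f lam y)
    (x0 : Blk n d) (hx0 : ∀ i (z : Vec d), f i (x0 i) ≤ f i z)
    (zinf : Vec d) :
    psi xlam ≤ (fTot f (WithLp.toLp 2 (fun _ => zinf) : Blk n d) - fTot f x0) / lam := by
  have hF := mul_psi_le_of_forall_FF_le hxlam (psi_const zinf)
  have hf : fTot f x0 ≤ fTot f xlam := fTot_le_fTot fun i => hx0 i (xlam i)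
  rw [le_div_iff₀ hlam]
  linarith

/-- for `λ > 0`, with `xlam` the minimizer of `F = f + λψ`, `x0` the
vector of the individual minimizers of the `fᵢ`, and `x(∞)` the vector whose blocks
all equal the minimizer `zinf` of `P(z) = (1/n) Σᵢ fᵢ(z)`, one has
`ψ(x(λ)) ≤ (f(x(∞)) − f(x(0)))/λ`. -/
theorem stmt2 (n d : ℕ) (hn : 0 < n) (L μ lam : ℝ) (hμ : 0 < μ) (hlam : 0 < lam)
    (f : Fin n → Vec d → ℝ) (g : Fin n → Vec d → Vec d)
    (hgrad : ∀ i (x : Vec d), HasGradientAt (f i) (g i x) x)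
    (hsmooth : ∀ i (x y : Vec d), ‖g i x - g i y‖ ≤ L * ‖x - y‖)
    (hsc : ∀ i, StrongConvexOn Set.univ μ (f i))
    (xlam : Blk n d) (hxlam : ∀ y : Blk n d, FF f lam xlam ≤ FF f lam y)
    (x0 : Blk n d) (hx0 : ∀ i (z : Vec d), f i (x0 i) ≤ f i z)
    (zinf : Vec d)
    (hzinf : ∀ z : Vec d, (n : ℝ)⁻¹ * ∑ i, f i zinf ≤ (n : ℝ)⁻¹ * ∑ i, f i z) :
    psi xlam ≤ (fTot f (WithLp.toLp 2 (fun _ => zinf) : Blk n d) - fTot f x0) / lam :=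
  stmt2_general n d lam hlam f xlam hxlam x0 hx0 zinf
end
end

section
/- Let each f_i : ℝ^d → ℝ be differentiable, L-smooth and μ-strongly convex with μ > 0, let λ > 0 and let x(λ) = (x_1(λ),…,x_n(λ)) be the unique minimizer of F = f + λψ, with x̄(λ) = (1/n)·Σ_{i=1}^n x_i(λ). Then for every i = 1,…,n one has x_i(λ) = x̄(λ) − (1/λ)·∇f_i(x_i(λ)). -/
/-!
The objective `F` is differentiable, and its gradient at `x` has `i`-th block
`(1/n) (∇fᵢ(xᵢ) + λ (xᵢ - x̄))`: in the gradient of `ψ` the contribution of `x̄` drops out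
because the deviations `xᵢ - x̄` sum to zero. A minimizer is a critical point, so every
block vanishes, which is the claimed identity.
-/

open scoped BigOperators
open Finset

noncomputable section

open RealInnerProductSpace

section

variable {n d : ℕ}

theorem sum_sub_blkAvg (x : Blk n d) : ∑ i, (x i - blkAvg x) = 0 := by
  rcases Nat.eq_zero_or_pos n with rfl | hn
  · simp
  · rw [Finset.sum_sub_distrib, Finset.sum_const, Finset.card_univ, Fintype.card_fin, blkAvg,
      ← Nat.cast_smul_eq_nsmul ℝ, smul_smul, mul_inv_cancel₀ (by positivity), one_smul, sub_self]

theorem hasFDerivAt_blkAvg (x : Blk n d) :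
    HasFDerivAt blkAvg ((n : ℝ)⁻¹ • ∑ j, PiLp.proj (𝕜 := ℝ) 2 (fun _ : Fin n => Vec d) j) x :=
  (HasFDerivAt.fun_sum (u := Finset.univ) fun j _ =>
    PiLp.hasFDerivAt_apply (𝕜 := ℝ) 2 x j).const_smul (n : ℝ)⁻¹

theorem hasGradientAt_fTot {f : Fin n → Vec d → ℝ} {g : Fin n → Vec d → Vec d} {x : Blk n d}
    (hgrad : ∀ i, HasGradientAt (f i) (g i (x i)) (x i)) :
    HasGradientAt (fTot f) (gradTot g x) x := by
  rw [hasGradientAt_iff_hasFDerivAt]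
  have hsum := HasFDerivAt.fun_sum (u := Finset.univ) fun i _ =>
    (hgrad i).hasFDerivAt.comp (f := fun y : Blk n d => y i) x (PiLp.hasFDerivAt_apply 2 x i)
  refine (hsum.const_mul (n : ℝ)⁻¹).congr_fderiv ?_
  ext y
  simp [gradTot, PiLp.inner_apply, inner_smul_left, Finset.mul_sum]

theorem hasGradientAt_psi (x : Blk n d) : HasGradientAt psi (gradPsi x) x := by
  rw [hasGradientAt_iff_hasFDerivAt]
  have hnorm := HasFDerivAt.fun_sum (u := Finset.univ) fun i _ =>
    ((PiLp.hasFDerivAt_apply 2 x i).sub (hasFDerivAt_blkAvg x)).norm_sq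
  refine (hnorm.const_mul (2 * n : ℝ)⁻¹).congr_fderiv ?_
  ext y
  have hmean : ∑ i, ⟪x i - blkAvg x, (n : ℝ)⁻¹ • ∑ j, y j⟫ = 0 := by
    rw [← sum_inner, sum_sub_blkAvg, inner_zero_left]
  rw [InnerProductSpace.toDual_apply_apply, PiLp.inner_apply]
  simp only [gradPsi, smul_apply, FunLike.coe_sum, Finset.sum_apply, ContinuousLinearMap.comp_apply,
    innerSL_apply_apply, sub_apply, PiLp.proj_apply, Pi.sub_apply, inner_sub_right]
  rw [← Finset.smul_sum, Finset.sum_sub_distrib, hmean, sub_zero]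
  simp only [real_inner_smul_left, ← Finset.mul_sum, smul_eq_mul, nsmul_eq_mul]
  ring

theorem hasGradientAt_FF {f : Fin n → Vec d → ℝ} {g : Fin n → Vec d → Vec d} {x : Blk n d}
    (hgrad : ∀ i, HasGradientAt (f i) (g i (x i)) (x i)) (lam : ℝ) :
    HasGradientAt (FF f lam) (gradTot g x + lam • gradPsi x) x := by
  rw [hasGradientAt_iff_hasFDerivAt, map_add, map_smul]
  exact (hasGradientAt_fTot hgrad).hasFDerivAt.add ((hasGradientAt_psi x).hasFDerivAt.const_mul lam)

theorem IsLocalMin.hasGradientAt_eq_zero {E : Type*} [NormedAddCommGroup E]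
    [InnerProductSpace ℝ E] [CompleteSpace E] {F : E → ℝ} {x v : E}
    (h : IsLocalMin F x) (hF : HasGradientAt F v x) : v = 0 :=
  (InnerProductSpace.toDual ℝ E).map_eq_zero_iff.mp (h.hasFDerivAt_eq_zero hF.hasFDerivAt)

theorem eq_blkAvg_sub_inv_smul_of_gradient_eq_zero {g : Fin n → Vec d → Vec d} {x : Blk n d}
    {lam : ℝ} (hlam : lam ≠ 0) (h : gradTot g x + lam • gradPsi x = 0) (i : Fin n) :
    x i = blkAvg x - lam⁻¹ • g i (x i) := by
  have hn : (n : ℝ)⁻¹ ≠ 0 := inv_ne_zero (Nat.cast_ne_zero.mpr i.pos.ne')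
  have hi := congrArg (· i) h
  simp only [PiLp.add_apply, PiLp.smul_apply, gradTot, gradPsi, PiLp.zero_apply] at hi
  rw [smul_comm lam, ← smul_add, smul_eq_zero_iff_right hn] at hi
  apply smul_right_injective _ hlam
  simp only [smul_sub, smul_inv_smul₀ hlam]
  linear_combination (norm := module) hi

end

theorem stmt4_general (n d : ℕ) (lam : ℝ) (hlam : 0 < lam)
    (f : Fin n → Vec d → ℝ) (g : Fin n → Vec d → Vec d)
    (hgrad : ∀ i (x : Vec d), HasGradientAt (f i) (g i x) x)
    (xlam : Blk n d) (hxlam : ∀ y : Blk n d, FF f lam xlam ≤ FF f lam y) :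
    ∀ i, xlam i = blkAvg xlam - lam⁻¹ • g i (xlam i) := by
  have hmin : IsLocalMin (FF f lam) xlam := Filter.Eventually.of_forall hxlam
  have hstat : gradTot g xlam + lam • gradPsi xlam = 0 :=
    hmin.hasGradientAt_eq_zero (hasGradientAt_FF (fun i => hgrad i (xlam i)) lam)
  exact eq_blkAvg_sub_inv_smul_of_gradient_eq_zero hlam.ne' hstat

/-- for `λ > 0`, the minimizer `x(λ)` of `F = f + λψ` satisfies
`xᵢ(λ) = x̄(λ) − (1/λ) ∇fᵢ(xᵢ(λ))` for every `i`. -/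
theorem stmt4 (n d : ℕ) (hn : 0 < n) (L μ lam : ℝ) (hμ : 0 < μ) (hlam : 0 < lam)
    (f : Fin n → Vec d → ℝ) (g : Fin n → Vec d → Vec d)
    (hgrad : ∀ i (x : Vec d), HasGradientAt (f i) (g i x) x)
    (hsmooth : ∀ i (x y : Vec d), ‖g i x - g i y‖ ≤ L * ‖x - y‖)
    (hsc : ∀ i, StrongConvexOn Set.univ μ (f i))
    (xlam : Blk n d) (hxlam : ∀ y : Blk n d, FF f lam xlam ≤ FF f lam y) :
    ∀ i, xlam i = blkAvg xlam - lam⁻¹ • g i (xlam i) :=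
  stmt4_general n d lam hlam f g hgrad xlam hxlam
end
end

section
/- Let L > 0, λ > 0 and μ > 0, and for p ∈ (0,1) define M(p) = max{L/(1−p), λ/p} and C(p) = p(1−p)·M(p) = max{pL, (1−p)λ}. Then p* = λ/(L+λ) minimizes both M(p) and C(p) over p ∈ (0,1); moreover M(p*) = L + λ and C(p*) = λL/(λ+L). Consequently, running L2GD with p = p* gives iteration count 2(L+λ)/μ · log(1/ε) and expected communication count (2λ/(λ+L))·(L/μ)·log(1/ε) to reach accuracy ε in the sense of achieving E‖x^k − x(λ)‖² ≤ ε‖x^0 − x(λ)‖² + 2nασ²/μ with α = 1/(2𝓛), 𝓛 = M(p)/n. -/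
/-! Both lower bounds come from the fact that a maximum dominates every convex combination of
its arguments. With weights `1 - p` and `p`, the two terms of `M(p)` average to `L + λ`.
With weights `λ/(L+λ)` and `L/(L+λ)`, the two terms of `C(p)` average to `λL/(λ+L)`.
At `p* = λ/(L+λ)` the two terms of the maximum coincide, so both bounds are attained. -/

open Set

namespace L2GD

variable {L lam p : ℝ}

lemma mul_max_div_one_sub_div (hp : p ∈ Ioo (0 : ℝ) 1) :
    p * (1 - p) * max (L / (1 - p)) (lam / p) = max (p * L) ((1 - p) * lam) := by
  obtain ⟨hp0, hp1⟩ := hp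
  have h1p : 0 < 1 - p := by linarith
  rw [mul_max_of_nonneg _ _ (by positivity)]
  congr 1 <;> field_simp

lemma add_le_max_div_one_sub_div (hp : p ∈ Ioo (0 : ℝ) 1) :
    L + lam ≤ max (L / (1 - p)) (lam / p) := by
  obtain ⟨hp0, hp1⟩ := hp
  have h1p : 0 < 1 - p := by linarith
  calc L + lam = (1 - p) * (L / (1 - p)) + p * (lam / p) := by field_simp
    _ ≤ _ := Convex.combo_le_max (𝕜 := ℝ) _ _ h1p.le hp0.le (by ring)

lemma mul_div_add_le_max (hL : 0 < L) (hlam : 0 < lam) :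
    lam * L / (lam + L) ≤ max (p * L) ((1 - p) * lam) := by
  calc lam * L / (lam + L)
        = lam / (lam + L) * (p * L) + L / (lam + L) * ((1 - p) * lam) := by field_simp; ring
    _ ≤ _ := Convex.combo_le_max (𝕜 := ℝ) _ _ (by positivity) (by positivity) (by field_simp)

lemma div_add_mem_Ioo (hL : 0 < L) (hlam : 0 < lam) : lam / (L + lam) ∈ Ioo (0 : ℝ) 1 :=
  ⟨by positivity, (div_lt_one (by positivity)).2 (by linarith)⟩

lemma one_sub_div_add (h : L + lam ≠ 0) : 1 - lam / (L + lam) = L / (L + lam) := by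
  field_simp; ring

lemma max_div_one_sub_div_add (hL : 0 < L) (hlam : 0 < lam) :
    max (L / (1 - lam / (L + lam))) (lam / (lam / (L + lam))) = L + lam := by
  rw [one_sub_div_add (by positivity)]
  field_simp
  exact max_self _

end L2GD

open L2GD

theorem stmt17_general (L lam μ ε : ℝ) (n : ℕ) (hL : 0 < L) (hlam : 0 < lam)
    (hn : 1 ≤ n) :
    let M : ℝ → ℝ := fun p => max (L / (1 - p)) (lam / p)
    let C : ℝ → ℝ := fun p => p * (1 - p) * M p
    let pstar : ℝ := lam / (L + lam)
    pstar ∈ Set.Ioo (0 : ℝ) 1 ∧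
      (∀ p ∈ Set.Ioo (0 : ℝ) 1, C p = max (p * L) ((1 - p) * lam)) ∧
      (∀ p ∈ Set.Ioo (0 : ℝ) 1, M pstar ≤ M p) ∧
      (∀ p ∈ Set.Ioo (0 : ℝ) 1, C pstar ≤ C p) ∧
      M pstar = L + lam ∧
      C pstar = lam * L / (lam + L) ∧
      (2 * (n : ℝ) * ((n : ℝ)⁻¹ * M pstar) / μ) * Real.log (1 / ε) =
        (2 * (L + lam) / μ) * Real.log (1 / ε) ∧
      pstar * (1 - pstar) *
          ((2 * (n : ℝ) * ((n : ℝ)⁻¹ * M pstar) / μ) * Real.log (1 / ε)) =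
        (2 * lam / (lam + L)) * (L / μ) * Real.log (1 / ε) := by
  intro M C pstar
  have hn0 : (n : ℝ) ≠ 0 := by positivity
  have hM : M pstar = L + lam := max_div_one_sub_div_add hL hlam
  have hC : C pstar = lam * L / (lam + L) := by
    change pstar * (1 - pstar) * M pstar = _
    rw [hM, one_sub_div_add (by positivity), show pstar = lam / (L + lam) from rfl]
    field_simp
    ring
  have hCp : ∀ p ∈ Ioo (0 : ℝ) 1, C p = max (p * L) ((1 - p) * lam) :=
    fun p hp => mul_max_div_one_sub_div hp
  refine ⟨div_add_mem_Ioo hL hlam, hCp, fun p hp => hM ▸ add_le_max_div_one_sub_div hp,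
    fun p hp => by rw [hC, hCp p hp]; exact mul_div_add_le_max hL hlam, hM, hC, ?_, ?_⟩
  · rw [hM]
    field_simp
  · rw [hM, one_sub_div_add (by positivity), show pstar = lam / (L + lam) from rfl]
    field_simp
    ring

/-- for `L, λ, μ > 0` and `M(p) = max{L/(1−p), λ/p}`,
`C(p) = p(1−p)M(p) = max{pL, (1−p)λ}` on `(0,1)`, the choice `p* = λ/(L+λ)`
minimizes both `M` and `C` over `(0,1)`, with `M(p*) = L + λ` and
`C(p*) = λL/(λ+L)`. Consequently, L2GD run with `p = p*`, stepsize `α = 1/(2𝓛)`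
where `𝓛 = M(p)/n`, and iteration count `(2n𝓛/μ)·log(1/ε)` uses
`2(L+λ)/μ · log(1/ε)` iterations and `(2λ/(λ+L))·(L/μ)·log(1/ε)` expected
communications (the expected communications in `k` iterations being `p(1−p)k`). -/
theorem stmt17 (L lam μ ε : ℝ) (n : ℕ) (hL : 0 < L) (hlam : 0 < lam) (hμ : 0 < μ)
    (hn : 1 ≤ n) (hε : 0 < ε) :
    let M : ℝ → ℝ := fun p => max (L / (1 - p)) (lam / p)
    let C : ℝ → ℝ := fun p => p * (1 - p) * M p
    let pstar : ℝ := lam / (L + lam)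
    pstar ∈ Set.Ioo (0 : ℝ) 1 ∧
      (∀ p ∈ Set.Ioo (0 : ℝ) 1, C p = max (p * L) ((1 - p) * lam)) ∧
      (∀ p ∈ Set.Ioo (0 : ℝ) 1, M pstar ≤ M p) ∧
      (∀ p ∈ Set.Ioo (0 : ℝ) 1, C pstar ≤ C p) ∧
      M pstar = L + lam ∧
      C pstar = lam * L / (lam + L) ∧
      (2 * (n : ℝ) * ((n : ℝ)⁻¹ * M pstar) / μ) * Real.log (1 / ε) =
        (2 * (L + lam) / μ) * Real.log (1 / ε) ∧
      pstar * (1 - pstar) *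
          ((2 * (n : ℝ) * ((n : ℝ)⁻¹ * M pstar) / μ) * Real.log (1 / ε)) =
        (2 * lam / (lam + L)) * (L / μ) * Real.log (1 / ε) :=
  stmt17_general L lam μ ε n hL hlam hn
end
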